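/- arXiv:1612.03360 — 3 statements merged into one kernel-verified Lean document; each statement's English description precedes it below -/
import Mathlib

section
/- For a Poisson channel Y ~ Poisson(X + λ₀) with nonnegative input X and λ₀ > 0, the mutual information satisfies I(X;Y) ≤ Cov(X + λ₀, log(X + λ₀)). -/
/-- Poisson pmf with mean `r`. -/
noncomputable def pois (r : ℝ) (n : ℕ) : ℝ :=
  Real.exp (-r) * r ^ n / n.factorial

/-!
Write `λₐ = xₐ + λ₀`, `Pₐ = Poi(λₐ)` for the channel laws, `M = ∑ pₐ Pₐ` for the output law and
`Q = Poi(λ̄)` with `λ̄ = ∑ pₐ λₐ`. The compensation identity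
`∑ pₐ D(Pₐ ‖ M) = ∑ pₐ D(Pₐ ‖ Q) - D(M ‖ Q)` together with Gibbs' inequality `D(M ‖ Q) ≥ 0`
bounds `I(X;Y)` by `∑ pₐ D(Pₐ ‖ Q)`, and `D(Poi(r) ‖ Poi(s)) = r log (r / s) + s - r` evaluates
this to `E[λ log λ] - λ̄ log λ̄`. Finally Jensen's inequality `E[log λ] ≤ log λ̄` gives the
covariance.
-/

open Real Finset

noncomputable def relEntropy {β : Type*} (p q : β → ℝ) : ℝ :=
  ∑' n, p n * log (p n / q n)

section RelEntropy

variable {β : Type*}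

lemma sub_le_mul_log_div {a b : ℝ} (ha : 0 ≤ a) (hb : 0 < b) : a - b ≤ a * log (a / b) := by
  have h : a * log (a / b) - (a - b) = b * InformationTheory.klFun (a / b) := by
    rw [InformationTheory.klFun_apply]
    field_simp
    ring
  linarith [mul_nonneg hb.le (InformationTheory.klFun_nonneg (div_nonneg ha hb.le))]

theorem relEntropy_nonneg {p q : β → ℝ} (hp : ∀ n, 0 ≤ p n) (hq : ∀ n, 0 < q n)
    (hps : Summable p) (hqs : Summable q) (hpq : ∑' n, q n ≤ ∑' n, p n) :
    0 ≤ relEntropy p q := by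
  by_cases hs : Summable fun n => p n * log (p n / q n)
  · calc 0 ≤ ∑' n, (p n - q n) := by rw [hps.tsum_sub hqs]; linarith
      _ ≤ relEntropy p q :=
        (hps.sub hqs).tsum_le_tsum (fun n => sub_le_mul_log_div (hp n) (hq n)) hs
  · exact (tsum_eq_zero_of_not_summable hs).ge

lemma summable_mul_log_div_of_mul_le {p m : β → ℝ} {c : ℝ} (hc : 0 < c) (hp : ∀ n, 0 < p n)
    (hcm : ∀ n, c * p n ≤ m n) (hps : Summable p) (hms : Summable m) :
    Summable fun n => p n * log (p n / m n) := by
  have hm n : 0 < m n := (mul_pos hc (hp n)).trans_le (hcm n)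
  have hlog n : log (p n / m n) ≤ -log c := by
    rw [← log_inv]
    refine log_le_log (div_pos (hp n) (hm n)) ?_
    rw [div_le_iff₀ (hm n), inv_mul_eq_div, le_div_iff₀ hc, mul_comm]
    exact hcm n
  -- `p log (p / m) - (p - m)` is squeezed between `0` and `-p log c + m - p`
  have hg : Summable fun n => p n * log (p n / m n) - (p n - m n) :=
    Summable.of_nonneg_of_le (fun n => sub_nonneg.2 (sub_le_mul_log_div (hp n).le (hm n)))
      (fun n => by nlinarith [hlog n, hp n])
      ((hps.mul_right (-log c)).sub (hps.sub hms))
  simpa using hg.add (hps.sub hms)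

theorem sum_mul_relEntropy_mixture_le {ι : Type*} [Fintype ι] {w : ι → ℝ} {P : ι → β → ℝ}
    {q : β → ℝ} (hw : ∀ i, 0 ≤ w i) (hw1 : ∑ i, w i = 1) (hP : ∀ i n, 0 < P i n)
    (hP1 : ∀ i, HasSum (P i) 1) (hq : ∀ n, 0 < q n) (hq1 : HasSum q 1)
    (hPq : ∀ i, Summable fun n => P i n * log (P i n / q n)) :
    ∑ i, w i * relEntropy (P i) (fun n => ∑ j, w j * P j n) ≤ ∑ i, w i * relEntropy (P i) q := by
  set m : β → ℝ := fun n => ∑ j, w j * P j n with hm_def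
  obtain ⟨i₀, -, hi₀⟩ := exists_lt_of_sum_lt (by simp [hw1] : ∑ i : ι, (0 : ℝ) < ∑ i, w i)
  have hm n : 0 < m n :=
    sum_pos' (fun j _ => mul_nonneg (hw j) (hP j n).le) ⟨i₀, mem_univ _, mul_pos hi₀ (hP i₀ n)⟩
  have hm1 : HasSum m 1 := by
    simpa [hw1] using hasSum_sum fun j (_ : j ∈ univ) => (hP1 j).mul_left (w j)
  have hPm i : Summable fun n => w i * (P i n * log (P i n / m n)) := by
    rcases (hw i).eq_or_lt with h | h
    · simp [← h]
    · refine (summable_mul_log_div_of_mul_le h (hP i) (fun n => ?_) (hP1 i).summable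
        hm1.summable).mul_left _
      exact single_le_sum (f := fun j => w j * P j n)
        (fun j _ => mul_nonneg (hw j) (hP j n).le) (mem_univ i)
  have hsplit n : ∑ i, w i * (P i n * log (P i n / m n)) =
      ∑ i, w i * (P i n * log (P i n / q n)) - m n * log (m n / q n) := by
    have h i : log (P i n / m n) = log (P i n / q n) - log (m n / q n) := by
      rw [log_div (hP i n).ne' (hm n).ne', log_div (hP i n).ne' (hq n).ne',
        log_div (hm n).ne' (hq n).ne']
      ring
    simp only [h, mul_sub, sum_sub_distrib, sub_right_inj]
    simp only [hm_def, sum_mul, mul_assoc]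
  have hA : Summable fun n => ∑ i, w i * (P i n * log (P i n / q n)) :=
    summable_sum fun i _ => (hPq i).mul_left _
  have hB : Summable fun n => m n * log (m n / q n) :=
    (hA.sub (summable_sum fun i _ => hPm i)).congr fun n => by rw [hsplit]; ring
  have hgibbs : 0 ≤ relEntropy m q := relEntropy_nonneg (fun n => (hm n).le) hq hm1.summable
    hq1.summable (by rw [hq1.tsum_eq, hm1.tsum_eq])
  calc ∑ i, w i * relEntropy (P i) m
      = ∑' n, ∑ i, w i * (P i n * log (P i n / m n)) := by
        simp only [relEntropy, ← tsum_mul_left]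
        exact (Summable.tsum_finsetSum fun i _ => hPm i).symm
    _ = ∑ i, w i * relEntropy (P i) q - relEntropy m q := by
        simp only [hsplit, relEntropy, ← tsum_mul_left]
        rw [hA.tsum_sub hB, Summable.tsum_finsetSum fun i _ => (hPq i).mul_left _]
    _ ≤ ∑ i, w i * relEntropy (P i) q := sub_le_self _ hgibbs

end RelEntropy

section Poisson

lemma pois_pos {r : ℝ} (hr : 0 < r) (n : ℕ) : 0 < pois r n := by
  unfold pois; positivity

lemma hasSum_pois (r : ℝ) : HasSum (pois r) 1 := by
  have h := (NormedSpace.expSeries_div_hasSum_exp r).mul_left (exp (-r))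
  rw [← exp_eq_exp_ℝ, ← exp_add, neg_add_cancel, exp_zero] at h
  exact h.congr_fun fun n => mul_div_assoc (exp (-r)) (r ^ n) (n.factorial : ℝ)

lemma pois_succ (r : ℝ) (n : ℕ) : ((n + 1 : ℕ) : ℝ) * pois r (n + 1) = r * pois r n := by
  rw [pois, pois, Nat.factorial_succ, Nat.cast_mul, pow_succ]
  field_simp

lemma hasSum_nat_mul_pois (r : ℝ) : HasSum (fun n : ℕ => n * pois r n) r := by
  have h := (hasSum_pois r).mul_left r
  rw [mul_one] at h
  simp only [← pois_succ] at h
  simpa using HasSum.zero_add (f := fun n : ℕ => (n : ℝ) * pois r n) h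

lemma log_pois_div_pois {r s : ℝ} (hr : 0 < r) (hs : 0 < s) (n : ℕ) :
    log (pois r n / pois s n) = s - r + n * log (r / s) := by
  have h : pois r n / pois s n = exp (s - r) * (r / s) ^ n := by
    simp only [pois, div_pow, sub_eq_add_neg, exp_add]
    field_simp
    rw [← exp_add, neg_add_cancel, exp_zero]
  rw [h, log_mul (exp_pos _).ne' (by positivity), log_exp, log_pow]

lemma hasSum_pois_mul_log_div_pois {r s : ℝ} (hr : 0 < r) (hs : 0 < s) :
    HasSum (fun n => pois r n * log (pois r n / pois s n)) (r * log (r / s) + s - r) := by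
  have h := ((hasSum_pois r).mul_left (s - r)).add ((hasSum_nat_mul_pois r).mul_left (log (r / s)))
  rw [show r * log (r / s) + s - r = (s - r) * 1 + log (r / s) * r by ring]
  refine h.congr_fun fun n => ?_
  rw [log_pois_div_pois hr hs]
  ring

theorem sum_mul_relEntropy_pois_mixture_le {ι : Type*} [Fintype ι] {w r : ι → ℝ}
    (hw : ∀ i, 0 ≤ w i) (hw1 : ∑ i, w i = 1) (hr : ∀ i, 0 < r i) :
    ∑ i, w i * relEntropy (pois (r i)) (fun n => ∑ j, w j * pois (r j) n) ≤
      ∑ i, w i * (r i * log (r i)) - (∑ i, w i * r i) * log (∑ i, w i * r i) := by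
  set rbar := ∑ i, w i * r i
  obtain ⟨i₀, -, hi₀⟩ := exists_lt_of_sum_lt (by simp [hw1] : ∑ i : ι, (0 : ℝ) < ∑ i, w i)
  have hrbar : 0 < rbar :=
    sum_pos' (fun i _ => mul_nonneg (hw i) (hr i).le) ⟨i₀, mem_univ _, mul_pos hi₀ (hr i₀)⟩
  calc ∑ i, w i * relEntropy (pois (r i)) (fun n => ∑ j, w j * pois (r j) n)
      ≤ ∑ i, w i * relEntropy (pois (r i)) (pois rbar) :=
        sum_mul_relEntropy_mixture_le hw hw1 (fun i => pois_pos (hr i)) (fun i => hasSum_pois _)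
          (pois_pos hrbar) (hasSum_pois rbar)
          (fun i => (hasSum_pois_mul_log_div_pois (hr i) hrbar).summable)
    _ = ∑ i, w i * (r i * log (r i / rbar) + rbar - r i) := by
        simp only [relEntropy, (hasSum_pois_mul_log_div_pois (hr _) hrbar).tsum_eq]
    _ = ∑ i, w i * (r i * log (r i)) - rbar * log rbar := by
        simp only [log_div (hr _).ne' hrbar.ne', mul_sub, mul_add, sum_add_distrib, sum_sub_distrib,
          ← sum_mul, hw1, ← mul_assoc]
        ring

end Poisson

lemma sum_mul_log_le_log_sum_mul {ι : Type*} [Fintype ι] {w r : ι → ℝ}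
    (hw : ∀ i, 0 ≤ w i) (hw1 : ∑ i, w i = 1) (hr : ∀ i, 0 < r i) :
    ∑ i, w i * log (r i) ≤ log (∑ i, w i * r i) := by
  simpa only [smul_eq_mul] using strictConcaveOn_log_Ioi.concaveOn.le_map_sum
    (fun i _ => hw i) hw1 (fun i _ => Set.mem_Ioi.2 (hr i))

/-- For a Poisson channel `Y ~ Poisson(X + lam0)` with bounded nonnegative input
`X` (here taking finitely many values `x a` with probabilities `p a`) and
`lam0 > 0`, the mutual information
`I(X;Y) = E[ D(P_{Y|X} ‖ P_Y) ]` is at most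
`Cov(X + lam0, log(X + lam0))`. -/
theorem stmt8 {α : Type} [Fintype α] (p : α → ℝ) (x : α → ℝ) (lam0 : ℝ)
    (hp : ∀ a, 0 ≤ p a) (hp1 : (∑ a, p a) = 1)
    (hx : ∀ a, 0 ≤ x a) (hlam : 0 < lam0) :
    (∑ a, p a * ∑' n : ℕ,
        pois (x a + lam0) n *
          Real.log (pois (x a + lam0) n / (∑ b, p b * pois (x b + lam0) n))) ≤
      (∑ a, p a * ((x a + lam0) * Real.log (x a + lam0))) -
        (∑ a, p a * (x a + lam0)) * (∑ a, p a * Real.log (x a + lam0)) := by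
  have hr a : 0 < x a + lam0 := add_pos_of_nonneg_of_pos (hx a) hlam
  have hmean : 0 ≤ ∑ a, p a * (x a + lam0) := sum_nonneg fun a _ => mul_nonneg (hp a) (hr a).le
  calc _ ≤ ∑ a, p a * ((x a + lam0) * log (x a + lam0)) -
          (∑ a, p a * (x a + lam0)) * log (∑ a, p a * (x a + lam0)) :=
        sum_mul_relEntropy_pois_mixture_le hp hp1 hr
    _ ≤ _ := by
        gcongr
        exact sum_mul_log_le_log_sum_mul hp hp1 hr
end

section
/- For a random variable X with 0 ≤ X ≤ A and E[X] = E_s, the quantity Cov(X + λ₀, log(X + λ₀)) is maximized, over all such distributions, by a two-point distribution supported on {0, A}; the maximum equals (E_s/A)(A − E_s)·log(A/λ₀ + 1) when E_s < A/2, and (A/4)·log(A/λ₀ + 1) when E_s ≥ A/2 (the latter maximum taken without the mean constraint active, i.e., over E[X] ≤ E_s with E_s ≥ A/2). -/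
open MeasureTheory

/-- `Cov(X + λ₀, log(X + λ₀))` for `X` distributed according to `μ`. -/
noncomputable def covTerm (lam0 : ℝ) (μ : Measure ℝ) : ℝ :=
  (∫ x, (x + lam0) * Real.log (x + lam0) ∂μ) -
    (∫ x, (x + lam0) ∂μ) * (∫ x, Real.log (x + lam0) ∂μ)

/-- The claimed maximum of `Cov(X + λ₀, log(X + λ₀))` over distributions on
`[0, A]` with mean at most `E_s`. -/
noncomputable def covMax (A lam0 Es : ℝ) : ℝ :=
  if Es < A / 2 then (Es / A) * (A - Es) * Real.log (A / lam0 + 1)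
  else (A / 4) * Real.log (A / lam0 + 1)

/-!
If `X ∈ [a, b]` has mean `m` and `Y ∈ [c, d]`, then subtracting from `Y` the chord through
`(a, c)` and `(b, d)` evaluated at `m` does not change `Cov(X, Y)`, and after that subtraction
`(X - m) (Y - k)` is bounded pointwise by `(m - a) (b - m) (d - c) / (b - a)`, the covariance of
the two-point law on `{a, b}` with mean `m`. For `Y = log (X + λ₀)` this gives
`Cov ≤ m (A - m) / A · log (A / λ₀ + 1)`; maximising `m (A - m)` over `m ≤ min E_s (A / 2)`
gives the bound, attained by the two-point law with mean `min E_s (A / 2)`.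
-/

open Set ProbabilityTheory unitInterval

lemma sub_mul_sub_chord_le {a b c d m x y : ℝ} (ham : a ≤ m) (hmb : m ≤ b)
    (hx : x ∈ Icc a b) (hy : y ∈ Icc c d) :
    (x - m) * ((b - a) * y - ((b - m) * d + (m - a) * c)) ≤ (m - a) * (b - m) * (d - c) := by
  obtain ⟨hax, hxb⟩ := hx
  obtain ⟨hcy, hyd⟩ := hy
  rcases le_total m x with hmx | hxm
  · nlinarith [mul_le_mul_of_nonneg_left hyd (sub_nonneg.2 hmx),
      mul_le_mul_of_nonneg_right hxb (mul_nonneg (sub_nonneg.2 ham) (sub_nonneg.2 (hcy.trans hyd)))]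
  · nlinarith [mul_le_mul_of_nonneg_left hcy (sub_nonneg.2 hxm),
      mul_le_mul_of_nonneg_right hax (mul_nonneg (sub_nonneg.2 hmb) (sub_nonneg.2 (hcy.trans hyd)))]

namespace ProbabilityTheory

variable {Ω : Type*} {mΩ : MeasurableSpace Ω} {μ : Measure Ω} [IsProbabilityMeasure μ]
  {X Y : Ω → ℝ}

lemma covariance_eq_integral_sub_mul (hX : MemLp X 2 μ) (hY : MemLp Y 2 μ) :
    cov[X, Y; μ] = ∫ ω, (X ω - μ[X]) * Y ω ∂μ := by
  have hXY : Integrable (fun ω => X ω * Y ω) μ := hX.integrable_mul hY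
  simp_rw [sub_mul]
  rw [integral_sub hXY ((hY.integrable one_le_two).const_mul _), integral_const_mul,
    covariance_eq_sub hX hY]
  rfl

lemma integral_mem_Icc_of_ae_mem_Icc {a b : ℝ} (hX : Integrable X μ)
    (h : ∀ᵐ ω ∂μ, X ω ∈ Icc a b) : μ[X] ∈ Icc a b := by
  constructor
  · simpa using integral_mono_ae (integrable_const a) hX (h.mono fun _ hω => hω.1)
  · simpa using integral_mono_ae hX (integrable_const b) (h.mono fun _ hω => hω.2)

theorem mul_covariance_le_of_ae_mem_Icc {a b c d : ℝ}
    (hXm : AEStronglyMeasurable X μ) (hYm : AEStronglyMeasurable Y μ)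
    (hX : ∀ᵐ ω ∂μ, X ω ∈ Icc a b) (hY : ∀ᵐ ω ∂μ, Y ω ∈ Icc c d) :
    (b - a) * cov[X, Y; μ] ≤ (μ[X] - a) * (b - μ[X]) * (d - c) := by
  have hX2 : MemLp X 2 μ := memLp_of_bounded hX hXm 2
  have hY2 : MemLp Y 2 μ := memLp_of_bounded hY hYm 2
  obtain ⟨ham, hmb⟩ := integral_mem_Icc_of_ae_mem_Icc (hX2.integrable one_le_two) hX
  set m := μ[X]
  set k := (b - m) * d + (m - a) * c
  have hZ2 : MemLp (fun ω => (b - a) * Y ω - k) 2 μ := (hY2.const_mul _).sub (memLp_const k)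
  calc (b - a) * cov[X, Y; μ] = cov[X, fun ω => (b - a) * Y ω - k; μ] := by
        rw [covariance_sub_const_right ((hY2.integrable one_le_two).const_mul _),
          covariance_const_mul_right]
    _ = ∫ ω, (X ω - m) * ((b - a) * Y ω - k) ∂μ := covariance_eq_integral_sub_mul hX2 hZ2
    _ ≤ ∫ _, (m - a) * (b - m) * (d - c) ∂μ := by
        refine integral_mono_ae ?_ (integrable_const _) ?_
        · exact (hX2.sub (memLp_const m)).integrable_mul hZ2
        · filter_upwards [hX, hY] with ω hXω hYω using sub_mul_sub_chord_le ham hmb hXω hYω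
    _ = (m - a) * (b - m) * (d - c) := by simp

end ProbabilityTheory

lemma log_add_mem_Icc {A lam0 x : ℝ} (hl : 0 < lam0) (hx : x ∈ Icc 0 A) :
    Real.log (x + lam0) ∈ Icc (Real.log lam0) (Real.log (A + lam0)) :=
  ⟨Real.log_le_log hl (by linarith [hx.1]),
    Real.log_le_log (by linarith [hx.1]) (by linarith [hx.2])⟩

lemma log_add_sub_log {A lam0 : ℝ} (hA : 0 ≤ A) (hl : 0 < lam0) :
    Real.log (A + lam0) - Real.log lam0 = Real.log (A / lam0 + 1) := by
  rw [← Real.log_div (by positivity) hl.ne', add_div, div_self hl.ne']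

lemma covTerm_eq_covariance {lam0 : ℝ} {μ : Measure ℝ} [IsProbabilityMeasure μ]
    (hX : MemLp (fun x => x) 2 μ) (hY : MemLp (fun x => Real.log (x + lam0)) 2 μ) :
    covTerm lam0 μ = cov[fun x => x, fun x => Real.log (x + lam0); μ] := by
  rw [← covariance_add_const_left (hX.integrable one_le_two) lam0, covariance_eq_sub _ hY]
  · rfl
  · exact hX.add (memLp_const lam0)

lemma covTerm_le {A lam0 : ℝ} (hA : 0 < A) (hl : 0 < lam0) {μ : Measure ℝ}
    [IsProbabilityMeasure μ] (hμ : ∀ᵐ x ∂μ, x ∈ Icc 0 A) :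
    covTerm lam0 μ ≤ (∫ x, x ∂μ) * (A - ∫ x, x ∂μ) / A * Real.log (A / lam0 + 1) := by
  have hXm : AEStronglyMeasurable (fun x : ℝ => x) μ := by fun_prop
  have hYm : AEStronglyMeasurable (fun x => Real.log (x + lam0)) μ :=
    (Real.measurable_log.comp (measurable_add_const lam0)).aestronglyMeasurable
  have hY : ∀ᵐ x ∂μ, Real.log (x + lam0) ∈ Icc (Real.log lam0) (Real.log (A + lam0)) :=
    hμ.mono fun x hx => log_add_mem_Icc hl hx
  have key := mul_covariance_le_of_ae_mem_Icc hXm hYm hμ hY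
  rw [← covTerm_eq_covariance (memLp_of_bounded hμ hXm 2) (memLp_of_bounded hY hYm 2),
    log_add_sub_log hA.le hl, sub_zero, sub_zero] at key
  rw [div_mul_eq_mul_div, le_div_iff₀' hA]
  linarith

lemma mul_sub_le_min_mul_sub {A m E : ℝ} (hm : m ≤ E) :
    m * (A - m) ≤ min E (A / 2) * (A - min E (A / 2)) := by
  rcases min_cases E (A / 2) with ⟨h, hE⟩ | ⟨h, hE⟩ <;> rw [h]
  · nlinarith
  · nlinarith [sq_nonneg (m - A / 2)]

lemma covMax_eq {A : ℝ} (hA : A ≠ 0) (lam0 Es : ℝ) :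
    covMax A lam0 Es = min Es (A / 2) * (A - min Es (A / 2)) / A * Real.log (A / lam0 + 1) := by
  unfold covMax
  split_ifs with h
  · rw [min_eq_left h.le]; ring
  · rw [min_eq_right (not_lt.1 h)]; field_simp; ring

lemma covTerm_bernoulliMeasure (lam0 x y : ℝ) (p : I) :
    covTerm lam0 Ber(x, y, p) =
      p * (1 - p) * (x - y) * (Real.log (x + lam0) - Real.log (y + lam0)) := by
  simp only [covTerm, integral_bernoulliMeasure, smul_eq_mul]
  ring

/-- Over all distributions of `X` supported in `[0,A]` with mean at most `E_s`,
`Cov(X + λ₀, log(X + λ₀))` is at most `covMax`, and the maximum is achieved by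
a two-point distribution supported on `{0, A}`. -/
theorem stmt9 (A lam0 Es : ℝ) (hA : 0 < A) (hl : 0 < lam0)
    (hE0 : 0 ≤ Es) (hEA : Es ≤ A) :
    (∀ μ : Measure ℝ, IsProbabilityMeasure μ → μ (Set.Icc 0 A)ᶜ = 0 →
        (∫ x, x ∂μ) ≤ Es → covTerm lam0 μ ≤ covMax A lam0 Es) ∧
    (∃ μ : Measure ℝ, IsProbabilityMeasure μ ∧ μ ({0, A} : Set ℝ)ᶜ = 0 ∧
        (∫ x, x ∂μ) ≤ Es ∧ covTerm lam0 μ = covMax A lam0 Es) := by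
  rw [covMax_eq hA.ne']
  set s := min Es (A / 2)
  have hs0 : 0 ≤ s := le_min hE0 (by positivity)
  have hsA : s ≤ A := (min_le_left _ _).trans hEA
  refine ⟨fun μ _ hsupp hmean => ?_, ?_⟩
  · calc covTerm lam0 μ
        ≤ (∫ x, x ∂μ) * (A - ∫ x, x ∂μ) / A * Real.log (A / lam0 + 1) :=
          covTerm_le hA hl (mem_ae_iff.2 hsupp)
      _ ≤ s * (A - s) / A * Real.log (A / lam0 + 1) := by
          have hL : 0 ≤ Real.log (A / lam0 + 1) :=
            Real.log_nonneg (by linarith [div_nonneg hA.le hl.le])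
          gcongr ?_ / A * _
          exact mul_sub_le_min_mul_sub hmean
  · let p : I := ⟨s / A, div_mem hs0 hA.le hsA⟩
    refine ⟨Ber(A, 0, p), inferInstance, ?_, ?_, ?_⟩
    · exact bernoulliMeasure_apply_of_notMem_of_notMem p
        (measurableSet_insert.2 (measurableSet_singleton A)).compl (by simp) (by simp)
    · have hmean : ∫ x, x ∂Ber(A, 0, p) = s := by
        simp [integral_bernoulliMeasure, p, div_mul_cancel₀ s hA.ne']
      exact hmean.le.trans (min_le_left _ _)
    · rw [covTerm_bernoulliMeasure, zero_add, log_add_sub_log hA.le hl]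
      simp only [p]
      field_simp
      ring
end

section
/- In the delay-selector channel with maximum delay Δ and at most N molecules per slot, if two input sequences x = (x₁,…,x_n) and x' = (x'₁,…,x'_n) satisfy x_i = x'_i for all i > Δ+1 and Σ_{i=1}^{Δ+1} x_i = Σ_{i=1}^{Δ+1} x'_i, then there exists an output sequence y reachable from both x and x'; in particular, x and x' cannot both belong to a zero-error code. -/
/-!
Route every molecule sent in a slot `i ≤ Δ` to slot `Δ` and leave every later molecule in its
own slot. The resulting output only records the total sent in the first `Δ + 1` slots and the
inputs after them, so `x` and `x'` produce the same output.
-/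

/-- Reachability relation of the delay-selector channel with maximum delay `Δ`
(0-indexed slots): `y` is obtainable from `x` if there is an assignment
`A i j` = number of molecules sent in slot `i` arriving in slot `j`, where each
molecule sent in slot `i` arrives in some slot `j` with `i ≤ j ≤ i + Δ`
(all arrivals occur within slots `0, …, n-1`). -/
def reaches (Δ n : ℕ) (x y : Fin n → ℕ) : Prop :=
  ∃ A : Fin n → Fin n → ℕ,
    (∀ i, (∑ j, A i j) = x i) ∧
    (∀ i j : Fin n, A i j ≠ 0 → (i : ℕ) ≤ (j : ℕ) ∧ (j : ℕ) ≤ (i : ℕ) + Δ) ∧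
    (∀ j, y j = ∑ i, A i j)

open Finset

def routed {n : ℕ} (d : Fin n → Fin n) (x : Fin n → ℕ) : Fin n → ℕ :=
  fun j => ∑ i with d i = j, x i

theorem reaches_routed {Δ n : ℕ} (d : Fin n → Fin n)
    (hd : ∀ i, i ≤ d i ∧ (d i : ℕ) ≤ i + Δ) (x : Fin n → ℕ) :
    reaches Δ n x (routed d x) := by
  refine ⟨fun i j => if d i = j then x i else 0, fun i => ?_, fun i j hij => ?_, fun j => ?_⟩
  · simp only [sum_ite_eq, mem_univ, if_true]
  · obtain rfl : d i = j := by by_contra h; simp [h] at hij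
    exact hd i
  · simp only [routed, sum_filter]

theorem routed_max_eq_of_agree {n : ℕ} (k : Fin n) {x x' : Fin n → ℕ}
    (htail : ∀ i, k < i → x i = x' i)
    (hsum : ∑ i with i ≤ k, x i = ∑ i with i ≤ k, x' i) :
    routed (max · k) x = routed (max · k) x' := by
  funext j
  by_cases hj : j = k
  · subst hj
    simpa only [routed, max_eq_right_iff] using hsum
  · refine sum_congr rfl fun i hi => htail i ?_
    rw [mem_filter] at hi
    by_contra! hik
    exact hj (hi.2 ▸ max_eq_right hik)

theorem stmt14_general (Δ n : ℕ) (hn : Δ < n) (x x' : Fin n → ℕ)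
    (htail : ∀ i : Fin n, Δ + 1 ≤ (i : ℕ) → x i = x' i)
    (hsum : (∑ i ∈ Finset.univ.filter (fun i : Fin n => (i : ℕ) ≤ Δ), x i) =
            (∑ i ∈ Finset.univ.filter (fun i : Fin n => (i : ℕ) ≤ Δ), x' i)) :
    (∃ y : Fin n → ℕ, reaches Δ n x y ∧ reaches Δ n x' y) ∧
    (∀ code : Set (Fin n → ℕ),
      (∀ u ∈ code, ∀ v ∈ code, u ≠ v →
        ¬∃ y, reaches Δ n u y ∧ reaches Δ n v y) →
      x ∈ code → x' ∈ code → x = x') := by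
  set k : Fin n := ⟨Δ, hn⟩
  have hroute : ∀ i, i ≤ max i k ∧ (max i k : ℕ) ≤ i + Δ := fun i =>
    ⟨le_max_left i k, by
      simpa only [Fin.coe_max] using max_le (Nat.le_add_right i Δ) (Nat.le_add_left Δ i)⟩
  have hcommon : ∃ y, reaches Δ n x y ∧ reaches Δ n x' y := by
    refine ⟨routed (max · k) x, reaches_routed _ hroute x, ?_⟩
    rw [routed_max_eq_of_agree k htail hsum]
    exact reaches_routed _ hroute x'
  refine ⟨hcommon, fun code hcode hx hx' => ?_⟩
  by_contra hne
  exact hcode x hx x' hx' hne hcommon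

/-- In the delay-selector channel with maximum delay `Δ` and at most `N`
molecules per slot, if `x` and `x'` agree beyond the first `Δ+1` slots and
have equal total counts over the first `Δ+1` slots, then some output `y` is
reachable from both; in particular `x, x'` cannot both lie in a zero-error
code. -/
theorem stmt14 (Δ N n : ℕ) (hn : Δ < n) (x x' : Fin n → ℕ)
    (hxN : ∀ i, x i ≤ N) (hx'N : ∀ i, x' i ≤ N)
    (htail : ∀ i : Fin n, Δ + 1 ≤ (i : ℕ) → x i = x' i)
    (hsum : (∑ i ∈ Finset.univ.filter (fun i : Fin n => (i : ℕ) ≤ Δ), x i) =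
            (∑ i ∈ Finset.univ.filter (fun i : Fin n => (i : ℕ) ≤ Δ), x' i)) :
    (∃ y : Fin n → ℕ, reaches Δ n x y ∧ reaches Δ n x' y) ∧
    (∀ code : Set (Fin n → ℕ),
      (∀ u ∈ code, ∀ v ∈ code, u ≠ v →
        ¬∃ y, reaches Δ n u y ∧ reaches Δ n v y) →
      x ∈ code → x' ∈ code → x = x') :=
  stmt14_general Δ n hn x x' htail hsum
end
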